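/- Let A = H*(V,ℂ) for V = ℙ(𝒪_{ℙ³} ⊕ 𝒪_{ℙ³}(−4)), with basis Γ₀ = 1, Γ₁, Δ₀, Γ₂, Δ₁, Γ₃, Δ₂, Δ₃ and products Γ_i∪Γ_j = Γ_{i+j} (i+j ≤ 3, else 0), Δ_i∪Γ_j = Δ_{i+j} (i+j ≤ 3, else 0), Δ_i∪Δ_j = 4Δ_{i+j+1} (i+j < 3, else 0). Then Δ₀ is nilpotent of order 5 (Δ₀^{∪4} = 4³Δ₃ ≠ 0, Δ₀^{∪5} = 0), and the kernels J_k = Ker(Δ₀^{∪k}∪·) are: J₁ = ℂΓ₃^∨ ⊕ ℂΓ₂^∨ ⊕ ℂΓ₁^∨ ⊕ ℂΔ₃, J₂ = ℂΓ₃^∨ ⊕ ℂΓ₂^∨ ⊕ H^{≥6}(V), J₃ = ℂΓ₃^∨ ⊕ H^{≥4}(V), J₄ = H^{≥2}(V), J₅ = A, where Γ_k^∨ = Δ_{3−k} − 4Γ_{4−k}. Hence I₀ = (Δ₀), I₁ = ⋯ = I₄ = H^{≥2}(V), I₅ = A. -/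

import Mathlib

/-!
Put `Γ_k^∨ = Δ_{3-k} - 4Γ_{4-k}`. The products give `Γ_k^∨ ∪ Δ₀ = 0`, and since
`Δ_i = Γ_{3-i}^∨ + 4Γ_{i+1}`, the elements `Γ₀, …, Γ₃` together with the span `K` of
`Γ₃^∨, Γ₂^∨, Γ₁^∨, Δ₃` span `A`. Every `Δ_j = Δ₀ ∪ Γ_j` kills `K`, whereas
`Γ_i ∪ Δ_j = Δ_{i+j}` (or `0` once `i + j > 3`) and `Δ₀, …, Δ₃` are linearly independent; hence
`Ker(Δ_j ∪ ·) = K + span {Γ_i : i + j > 3}`. Since `Δ₀^{k+1} = 4^k Δ_k`, this computes `J_{k+1}`.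
Finally `Δ_i = Γ_i ∪ Δ₀` and `Γ_{i+1} = (Δ_i - Γ_{3-i}^∨)/4` put `H^{≥2}` inside `(Δ₀) + J₁`,
while `(Δ₀) ⊆ J₄` because `Δ₀⁵ = 0`.
-/

open LinearMap Submodule

section MulRight

variable {R A : Type*}

theorem ker_mulRight_smul [Field R] [Ring A] [Algebra R A] {c : R} (hc : c ≠ 0) (a : A) :
    ker (mulRight R (c • a)) = ker (mulRight R a) := by
  ext x
  simp [hc]

variable [CommSemiring R] [Semiring A] [Algebra R A]

theorem ker_mulRight_pow_mono (a : A) {k m : ℕ} (hkm : k ≤ m) :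
    ker (mulRight R (a ^ k)) ≤ ker (mulRight R (a ^ m)) := by
  intro x hx
  rw [mem_ker, mulRight_apply] at hx ⊢
  rw [← Nat.add_sub_cancel' hkm, pow_add, ← mul_assoc, hx, zero_mul]

theorem range_mulRight_le_ker_mulRight_pow {a : A} {k : ℕ} (ha : a ^ (k + 1) = 0) :
    range (mulRight R a) ≤ ker (mulRight R (a ^ k)) := by
  rintro _ ⟨y, rfl⟩
  rw [mem_ker, mulRight_apply, mulRight_apply, mul_assoc, ← pow_succ', ha, mul_zero]

end MulRight

section

variable {A : Type*} [CommRing A] [Algebra ℂ A] {G Dl : ℕ → A} {bA : Module.Basis (Fin 8) ℂ A}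

def gammaDual (G Dl : ℕ → A) (k : ℕ) : A :=
  Dl (3 - k) - (4 : ℂ) • G (4 - k)

def dualSpan (G Dl : ℕ → A) : Submodule ℂ A :=
  span ℂ {gammaDual G Dl 3, gammaDual G Dl 2, gammaDual G Dl 1, Dl 3}

def basisVectors (G Dl : ℕ → A) : Fin 8 → A :=
  ![G 0, G 1, Dl 0, G 2, Dl 1, G 3, Dl 2, Dl 3]

structure DeltaProducts (G Dl : ℕ → A) : Prop where
  mul_G : ∀ i j : ℕ, i + j ≤ 3 → Dl i * G j = Dl (i + j)
  mul_G_eq_zero : ∀ i j : ℕ, i ≤ 3 → j ≤ 3 → 3 < i + j → Dl i * G j = 0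
  mul_Dl : ∀ i j : ℕ, i ≤ 3 → j ≤ 3 → i + j < 3 → Dl i * Dl j = (4 : ℂ) • Dl (i + j + 1)
  mul_Dl_eq_zero : ∀ i j : ℕ, i ≤ 3 → j ≤ 3 → 3 ≤ i + j → Dl i * Dl j = 0

theorem Dl_coeffs_eq_zero (hbA : ∀ u, bA u = basisVectors G Dl u) {b₀ b₁ b₂ b₃ : ℂ}
    (hb : b₀ • Dl 0 + b₁ • Dl 1 + b₂ • Dl 2 + b₃ • Dl 3 = 0) :
    b₀ = 0 ∧ b₁ = 0 ∧ b₂ = 0 ∧ b₃ = 0 := by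
  have := Fintype.linearIndependent_iff.mp bA.linearIndependent ![0, 0, b₀, 0, b₁, 0, b₂, b₃]
    (by simpa [Fin.sum_univ_eight, hbA, basisVectors, add_assoc] using hb)
  exact ⟨this 2, this 4, this 6, this 7⟩

theorem exists_sub_mem_dualSpan (hbA : ∀ u, bA u = basisVectors G Dl u) (x : A) :
    ∃ a : Fin 4 → ℂ, x - ∑ i, a i • G i ∈ dualSpan G Dl := by
  set c := bA.repr x
  refine ⟨![c 0, c 1 + 4 * c 2, c 3 + 4 * c 4, c 5 + 4 * c 6], ?_⟩
  have hx : x - ∑ i, ![c 0, c 1 + 4 * c 2, c 3 + 4 * c 4, c 5 + 4 * c 6] i • G i =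
      c 2 • gammaDual G Dl 3 + c 4 • gammaDual G Dl 2 + c 6 • gammaDual G Dl 1 + c 7 • Dl 3 := by
    conv_lhs => rw [← bA.sum_repr x]
    simp only [hbA, basisVectors, gammaDual, Fin.sum_univ_eight, Fin.sum_univ_four, Fin.isValue,
      Matrix.cons_val_zero, Matrix.cons_val_one, Matrix.cons_val, Fin.coe_ofNat_eq_mod,
      Nat.reduceSub, Nat.zero_mod, Nat.one_mod, Nat.mod_succ, tsub_self]
    module
  rw [hx]
  refine add_mem (add_mem (add_mem ?_ ?_) ?_) ?_ <;> exact smul_mem _ _ (subset_span (by simp))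

namespace DeltaProducts

theorem G_mul_Dl (h : DeltaProducts G Dl) {i j : ℕ} (hij : i + j ≤ 3) :
    G i * Dl j = Dl (i + j) := by
  rw [mul_comm, h.mul_G j i (by omega), add_comm]

theorem G_mul_Dl_eq_zero (h : DeltaProducts G Dl) {i j : ℕ} (hi : i ≤ 3) (hj : j ≤ 3)
    (hij : 3 < i + j) : G i * Dl j = 0 := by
  rw [mul_comm, h.mul_G_eq_zero j i hj hi (by omega)]

theorem Dl_zero_pow_succ (h : DeltaProducts G Dl) {k : ℕ} (hk : k ≤ 3) :
    Dl 0 ^ (k + 1) = (4 : ℂ) ^ k • Dl k := by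
  induction k with
  | zero => simp
  | succ k ih =>
    rw [pow_succ, ih (by omega), smul_mul_assoc, h.mul_Dl k 0 (by omega) (by omega) (by omega),
      smul_smul, pow_succ]

theorem Dl_zero_pow_five (h : DeltaProducts G Dl) : Dl 0 ^ 5 = 0 := by
  rw [pow_succ, h.Dl_zero_pow_succ le_rfl, smul_mul_assoc,
    h.mul_Dl_eq_zero 3 0 le_rfl (by omega) le_rfl, smul_zero]

theorem gammaDual_mul_Dl_zero (h : DeltaProducts G Dl) {k : ℕ} (hk₁ : 1 ≤ k) (hk₃ : k ≤ 3) :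
    gammaDual G Dl k * Dl 0 = 0 := by
  have hidx : 3 - k + 0 + 1 = 4 - k + 0 := by omega
  rw [gammaDual, sub_mul, smul_mul_assoc, h.mul_Dl _ 0 (by omega) (by omega) (by omega),
    h.G_mul_Dl (by omega), hidx, sub_self]

theorem Dl_eq_Dl_zero_mul_G (h : DeltaProducts G Dl) {j : ℕ} (hj : j ≤ 3) :
    Dl j = Dl 0 * G j := by
  rw [h.mul_G 0 j (by omega), zero_add]

theorem dualSpan_le_ker (h : DeltaProducts G Dl) :
    dualSpan G Dl ≤ ker (mulRight ℂ (Dl 0)) := by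
  simp only [dualSpan, span_le, Set.insert_subset_iff, Set.singleton_subset_iff,
    SetLike.mem_coe, mem_ker, mulRight_apply]
  exact ⟨h.gammaDual_mul_Dl_zero (by omega) le_rfl, h.gammaDual_mul_Dl_zero (by omega) (by omega),
    h.gammaDual_mul_Dl_zero le_rfl (by omega), h.mul_Dl_eq_zero 3 0 le_rfl (by omega) le_rfl⟩

theorem mul_Dl_eq_zero_of_mem_dualSpan (h : DeltaProducts G Dl) {y : A}
    (hy : y ∈ dualSpan G Dl) {j : ℕ} (hj : j ≤ 3) : y * Dl j = 0 := by
  have hy₀ : y * Dl 0 = 0 := h.dualSpan_le_ker hy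
  rw [h.Dl_eq_Dl_zero_mul_G hj, ← mul_assoc, hy₀, zero_mul]

theorem gammaDual_mul_Dl (h : DeltaProducts G Dl) {k j : ℕ} (hk₁ : 1 ≤ k)
    (hk₃ : k ≤ 3) (hj : j ≤ 3) : gammaDual G Dl k * Dl j = 0 := by
  rw [h.Dl_eq_Dl_zero_mul_G hj, ← mul_assoc, h.gammaDual_mul_Dl_zero hk₁ hk₃, zero_mul]

theorem coeff_eq_zero_of_sum_smul_G_mul_Dl_eq_zero (h : DeltaProducts G Dl)
    (hbA : ∀ u, bA u = basisVectors G Dl u)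
    {j : ℕ} (hj : j ≤ 3) {a : Fin 4 → ℂ} (ha : (∑ i, a i • G i) * Dl j = 0) (i : Fin 4)
    (hij : (i : ℕ) + j ≤ 3) : a i = 0 := by
  simp only [Fin.sum_univ_four, add_mul, smul_mul_assoc] at ha
  interval_cases j <;>
    simp only [Fin.isValue, Fin.coe_ofNat_eq_mod, Nat.reduceMod, Nat.zero_mod, Nat.one_mod,
      Nat.mod_succ, Nat.reduceAdd, Nat.reduceLeDiff, Nat.reduceLT, zero_add, add_zero, smul_zero,
      h.G_mul_Dl, h.G_mul_Dl_eq_zero] at ha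
  · obtain ⟨h₀, h₁, h₂, h₃⟩ := Dl_coeffs_eq_zero hbA ha
    fin_cases i <;> assumption
  · obtain ⟨-, h₀, h₁, h₂⟩ := Dl_coeffs_eq_zero hbA (b₀ := 0) (by simpa using ha)
    fin_cases i <;> first | assumption | simp at hij
  · obtain ⟨-, -, h₀, h₁⟩ := Dl_coeffs_eq_zero hbA (b₀ := 0) (b₁ := 0) (by simpa using ha)
    fin_cases i <;> first | assumption | simp at hij
  · obtain ⟨-, -, -, h₀⟩ :=
      Dl_coeffs_eq_zero hbA (b₀ := 0) (b₁ := 0) (b₂ := 0) (by simpa using ha)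
    fin_cases i <;> first | assumption | simp at hij

theorem ker_mulRight_Dl_eq (h : DeltaProducts G Dl)
    (hbA : ∀ u, bA u = basisVectors G Dl u)
    {j : ℕ} (hj : j ≤ 3) {S : Submodule ℂ A} (hdual : dualSpan G Dl ≤ S)
    (hG : ∀ i : Fin 4, 3 < (i : ℕ) + j → G i ∈ S) (hS : S ≤ ker (mulRight ℂ (Dl j))) :
    ker (mulRight ℂ (Dl j)) = S := by
  refine le_antisymm (fun x hx => ?_) hS
  obtain ⟨a, hy⟩ := exists_sub_mem_dualSpan hbA x
  have ha : (∑ i, a i • G i) * Dl j = 0 := by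
    have hx' : x * Dl j = 0 := hx
    rw [← sub_sub_cancel x (∑ i, a i • G i), sub_mul, hx',
      h.mul_Dl_eq_zero_of_mem_dualSpan hy hj, sub_zero]
  rw [← sub_add_cancel x (∑ i, a i • G i)]
  refine add_mem (hdual hy) (sum_mem fun i _ => ?_)
  by_cases hij : 3 < (i : ℕ) + j
  · exact smul_mem _ _ (hG i hij)
  · rw [h.coeff_eq_zero_of_sum_smul_G_mul_Dl_eq_zero hbA hj ha i (by omega), zero_smul]
    exact zero_mem _

theorem ker_mulRight_Dl_zero (h : DeltaProducts G Dl)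
    (hbA : ∀ u, bA u = basisVectors G Dl u) : ker (mulRight ℂ (Dl 0)) = dualSpan G Dl :=
  h.ker_mulRight_Dl_eq hbA (by omega) le_rfl (fun i hi => by omega) h.dualSpan_le_ker

theorem ker_mulRight_Dl_one (h : DeltaProducts G Dl)
    (hbA : ∀ u, bA u = basisVectors G Dl u) :
    ker (mulRight ℂ (Dl 1)) =
      span ℂ {gammaDual G Dl 3, gammaDual G Dl 2, G 3, Dl 2, Dl 3} := by
  refine h.ker_mulRight_Dl_eq hbA (by omega) ?_ (fun i hi => ?_) ?_
  · simp only [dualSpan, span_le, Set.insert_subset_iff, Set.singleton_subset_iff,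
      SetLike.mem_coe]
    refine ⟨subset_span (by simp), subset_span (by simp), ?_, subset_span (by simp)⟩
    exact sub_mem (subset_span (by simp)) (smul_mem _ _ (subset_span (by simp)))
  · obtain rfl : i = 3 := by omega
    exact subset_span (by simp)
  · simp only [span_le, Set.insert_subset_iff, Set.singleton_subset_iff, SetLike.mem_coe,
      mem_ker, mulRight_apply]
    exact ⟨h.gammaDual_mul_Dl (by omega) le_rfl (by omega),
      h.gammaDual_mul_Dl (by omega) (by omega) (by omega),
      h.G_mul_Dl_eq_zero le_rfl (by omega) (by omega),
      h.mul_Dl_eq_zero 2 1 (by omega) (by omega) (by omega),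
      h.mul_Dl_eq_zero 3 1 (by omega) (by omega) (by omega)⟩

theorem ker_mulRight_Dl_two (h : DeltaProducts G Dl)
    (hbA : ∀ u, bA u = basisVectors G Dl u) :
    ker (mulRight ℂ (Dl 2)) =
      span ℂ {gammaDual G Dl 3, G 2, Dl 1, G 3, Dl 2, Dl 3} := by
  refine h.ker_mulRight_Dl_eq hbA (by omega) ?_ (fun i hi => ?_) ?_
  · simp only [dualSpan, span_le, Set.insert_subset_iff, Set.singleton_subset_iff,
      SetLike.mem_coe]
    refine ⟨subset_span (by simp), ?_, ?_, subset_span (by simp)⟩ <;>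
      exact sub_mem (subset_span (by simp)) (smul_mem _ _ (subset_span (by simp)))
  · obtain rfl | rfl : i = 2 ∨ i = 3 := by omega
    all_goals exact subset_span (by simp)
  · simp only [span_le, Set.insert_subset_iff, Set.singleton_subset_iff, SetLike.mem_coe,
      mem_ker, mulRight_apply]
    exact ⟨h.gammaDual_mul_Dl (by omega) le_rfl (by omega),
      h.G_mul_Dl_eq_zero (by omega) (by omega) (by omega),
      h.mul_Dl_eq_zero 1 2 (by omega) (by omega) (by omega),
      h.G_mul_Dl_eq_zero le_rfl (by omega) (by omega),
      h.mul_Dl_eq_zero 2 2 (by omega) (by omega) (by omega),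
      h.mul_Dl_eq_zero 3 2 (by omega) (by omega) (by omega)⟩

theorem ker_mulRight_Dl_three (h : DeltaProducts G Dl)
    (hbA : ∀ u, bA u = basisVectors G Dl u) :
    ker (mulRight ℂ (Dl 3)) = span ℂ {G 1, Dl 0, G 2, Dl 1, G 3, Dl 2, Dl 3} := by
  refine h.ker_mulRight_Dl_eq hbA le_rfl ?_ (fun i hi => ?_) ?_
  · simp only [dualSpan, span_le, Set.insert_subset_iff, Set.singleton_subset_iff,
      SetLike.mem_coe]
    refine ⟨?_, ?_, ?_, subset_span (by simp)⟩ <;>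
      exact sub_mem (subset_span (by simp)) (smul_mem _ _ (subset_span (by simp)))
  · obtain rfl | rfl | rfl : i = 1 ∨ i = 2 ∨ i = 3 := by omega
    all_goals exact subset_span (by simp)
  · simp only [span_le, Set.insert_subset_iff, Set.singleton_subset_iff, SetLike.mem_coe,
      mem_ker, mulRight_apply]
    exact ⟨h.G_mul_Dl_eq_zero (by omega) le_rfl (by omega),
      h.mul_Dl_eq_zero 0 3 (by omega) le_rfl (by omega),
      h.G_mul_Dl_eq_zero (by omega) le_rfl (by omega),
      h.mul_Dl_eq_zero 1 3 (by omega) le_rfl (by omega),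
      h.G_mul_Dl_eq_zero le_rfl le_rfl (by omega),
      h.mul_Dl_eq_zero 2 3 (by omega) le_rfl (by omega),
      h.mul_Dl_eq_zero 3 3 le_rfl le_rfl (by omega)⟩

theorem Dl_mem_range (h : DeltaProducts G Dl) {i : ℕ} (hi : i ≤ 3) :
    Dl i ∈ range (mulRight ℂ (Dl 0)) :=
  ⟨G i, by rw [mulRight_apply, h.G_mul_Dl (by omega), add_zero]⟩

theorem G_succ_mem_range_sup_ker (h : DeltaProducts G Dl) {i : ℕ} (hi : i ≤ 2) :
    G (i + 1) ∈ range (mulRight ℂ (Dl 0)) ⊔ ker (mulRight ℂ (Dl 0)) := by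
  have hG : G (i + 1) = (4⁻¹ : ℂ) • (Dl i - gammaDual G Dl (3 - i)) := by
    rw [gammaDual, show 3 - (3 - i) = i by omega, show 4 - (3 - i) = i + 1 by omega,
      sub_sub_cancel, smul_smul, inv_mul_cancel₀ (by norm_num : (4 : ℂ) ≠ 0), one_smul]
  rw [hG]
  exact smul_mem _ _ (sub_mem (mem_sup_left (h.Dl_mem_range (by omega)))
    (mem_sup_right (h.gammaDual_mul_Dl_zero (by omega) (by omega))))

theorem span_le_range_sup_ker (h : DeltaProducts G Dl) :
    span ℂ {G 1, Dl 0, G 2, Dl 1, G 3, Dl 2, Dl 3} ≤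
      range (mulRight ℂ (Dl 0)) ⊔ ker (mulRight ℂ (Dl 0)) := by
  simp only [span_le, Set.insert_subset_iff, Set.singleton_subset_iff, SetLike.mem_coe]
  exact ⟨h.G_succ_mem_range_sup_ker (i := 0) (by omega), mem_sup_left (h.Dl_mem_range (by omega)),
    h.G_succ_mem_range_sup_ker (i := 1) (by omega), mem_sup_left (h.Dl_mem_range (by omega)),
    h.G_succ_mem_range_sup_ker (i := 2) le_rfl, mem_sup_left (h.Dl_mem_range (by omega)),
    mem_sup_left (h.Dl_mem_range le_rfl)⟩

end DeltaProducts

end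

theorem stmt17_general {A : Type*} [CommRing A] [Algebra ℂ A]
    (G Dl : ℕ → A)
    (hDG : ∀ i j : ℕ, i + j ≤ 3 → Dl i * G j = Dl (i + j))
    (hDG0 : ∀ i j : ℕ, i ≤ 3 → j ≤ 3 → 3 < i + j → Dl i * G j = 0)
    (hDD : ∀ i j : ℕ, i ≤ 3 → j ≤ 3 → i + j < 3 → Dl i * Dl j = (4 : ℂ) • Dl (i + j + 1))
    (hDD0 : ∀ i j : ℕ, i ≤ 3 → j ≤ 3 → 3 ≤ i + j → Dl i * Dl j = 0)
    (bA : Module.Basis (Fin 8) ℂ A)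
    (hbA : ∀ u : Fin 8,
      bA u = ![G 0, G 1, Dl 0, G 2, Dl 1, G 3, Dl 2, Dl 3] u) :
    let Gd : ℕ → A := fun k => Dl (3 - k) - (4 : ℂ) • G (4 - k)   -- Γ_k^∨
    let J : ℕ → Submodule ℂ A := fun k => LinearMap.ker (LinearMap.mulRight ℂ (Dl 0 ^ k))
    let I0 : Submodule ℂ A := LinearMap.range (LinearMap.mulRight ℂ (Dl 0))
    let Hge2 : Submodule ℂ A :=
      Submodule.span ℂ {G 1, Dl 0, G 2, Dl 1, G 3, Dl 2, Dl 3}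
    -- Δ₀ is nilpotent of order 5
    (Dl 0 ^ 5 = 0 ∧ Dl 0 ^ 4 = ((4 : ℂ) ^ 3) • Dl 3 ∧ Dl 0 ^ 4 ≠ 0) ∧
    -- the kernels J_k
    (J 1 = Submodule.span ℂ {Gd 3, Gd 2, Gd 1, Dl 3}) ∧
    (J 2 = Submodule.span ℂ {Gd 3, Gd 2, G 3, Dl 2, Dl 3}) ∧
    (J 3 = Submodule.span ℂ {Gd 3, G 2, Dl 1, G 3, Dl 2, Dl 3}) ∧
    (J 4 = Hge2) ∧
    (J 5 = ⊤) ∧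
    -- hence I₁ = ⋯ = I₄ = H^{≥2}(V) and I₅ = A
    (∀ k : ℕ, 1 ≤ k → k ≤ 4 → I0 ⊔ J k = Hge2) ∧
    (I0 ⊔ J 5 = ⊤) := by
  intro Gd J I0 Hge2
  have h : DeltaProducts G Dl := ⟨hDG, hDG0, hDD, hDD0⟩
  have hJ : ∀ k ≤ 3, J (k + 1) = ker (mulRight ℂ (Dl k)) := fun k hk => by
    simp only [J, h.Dl_zero_pow_succ hk, ker_mulRight_smul (pow_ne_zero k (by norm_num : (4 : ℂ) ≠ 0))]
  have hJ4 : J 4 = Hge2 := (hJ 3 le_rfl).trans (h.ker_mulRight_Dl_three hbA)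
  have hJ5 : J 5 = ⊤ := by
    simp only [J, h.Dl_zero_pow_five, mulRight_zero_eq_zero, ker_zero]
  refine ⟨⟨h.Dl_zero_pow_five, h.Dl_zero_pow_succ le_rfl, ?_⟩,
    (hJ 0 (by omega)).trans (h.ker_mulRight_Dl_zero hbA),
    (hJ 1 (by omega)).trans (h.ker_mulRight_Dl_one hbA),
    (hJ 2 (by omega)).trans (h.ker_mulRight_Dl_two hbA), hJ4, hJ5, fun k hk₁ hk₄ => ?_,
    by rw [hJ5, sup_top_eq]⟩
  · rw [h.Dl_zero_pow_succ le_rfl]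
    exact smul_ne_zero (pow_ne_zero _ (by norm_num)) (by simpa [hbA] using bA.ne_zero 7)
  · refine le_antisymm (sup_le ?_ ((ker_mulRight_pow_mono _ hk₄).trans hJ4.le)) ?_
    · exact (range_mulRight_le_ker_mulRight_pow h.Dl_zero_pow_five).trans hJ4.le
    · calc Hge2 ≤ I0 ⊔ ker (mulRight ℂ (Dl 0)) := h.span_le_range_sup_ker
        _ = I0 ⊔ J 1 := by simp only [J, pow_one]
        _ ≤ I0 ⊔ J k := sup_le_sup_left (ker_mulRight_pow_mono _ hk₁) _

/-- in `A = H*(V,ℂ)` for `V = ℙ(𝒪_{ℙ³} ⊕ 𝒪_{ℙ³}(−4))` (with basis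
`Γ₀,Γ₁,Δ₀,Γ₂,Δ₁,Γ₃,Δ₂,Δ₃` and the listed products), `Δ₀` is nilpotent of order
`5`, the kernels `J_k = Ker(Δ₀^k ∪ ·)` are as listed, and hence
`I₀ = (Δ₀)`, `I₁ = ⋯ = I₄ = H^{≥2}(V)`, `I₅ = A`. -/
theorem stmt17 {A : Type*} [CommRing A] [Algebra ℂ A]
    (G Dl : ℕ → A)
    (hone : G 0 = 1)
    (hGG : ∀ i j : ℕ, i + j ≤ 3 → G i * G j = G (i + j))
    (hGG0 : ∀ i j : ℕ, i ≤ 3 → j ≤ 3 → 3 < i + j → G i * G j = 0)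
    (hDG : ∀ i j : ℕ, i + j ≤ 3 → Dl i * G j = Dl (i + j))
    (hDG0 : ∀ i j : ℕ, i ≤ 3 → j ≤ 3 → 3 < i + j → Dl i * G j = 0)
    (hDD : ∀ i j : ℕ, i ≤ 3 → j ≤ 3 → i + j < 3 → Dl i * Dl j = (4 : ℂ) • Dl (i + j + 1))
    (hDD0 : ∀ i j : ℕ, i ≤ 3 → j ≤ 3 → 3 ≤ i + j → Dl i * Dl j = 0)
    (bA : Module.Basis (Fin 8) ℂ A)
    (hbA : ∀ u : Fin 8,
      bA u = ![G 0, G 1, Dl 0, G 2, Dl 1, G 3, Dl 2, Dl 3] u) :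
    let Gd : ℕ → A := fun k => Dl (3 - k) - (4 : ℂ) • G (4 - k)   -- Γ_k^∨
    let J : ℕ → Submodule ℂ A := fun k => LinearMap.ker (LinearMap.mulRight ℂ (Dl 0 ^ k))
    let I0 : Submodule ℂ A := LinearMap.range (LinearMap.mulRight ℂ (Dl 0))
    let Hge2 : Submodule ℂ A :=
      Submodule.span ℂ {G 1, Dl 0, G 2, Dl 1, G 3, Dl 2, Dl 3}
    -- Δ₀ is nilpotent of order 5
    (Dl 0 ^ 5 = 0 ∧ Dl 0 ^ 4 = ((4 : ℂ) ^ 3) • Dl 3 ∧ Dl 0 ^ 4 ≠ 0) ∧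
    -- the kernels J_k
    (J 1 = Submodule.span ℂ {Gd 3, Gd 2, Gd 1, Dl 3}) ∧
    (J 2 = Submodule.span ℂ {Gd 3, Gd 2, G 3, Dl 2, Dl 3}) ∧
    (J 3 = Submodule.span ℂ {Gd 3, G 2, Dl 1, G 3, Dl 2, Dl 3}) ∧
    (J 4 = Hge2) ∧
    (J 5 = ⊤) ∧
    -- hence I₁ = ⋯ = I₄ = H^{≥2}(V) and I₅ = A
    (∀ k : ℕ, 1 ≤ k → k ≤ 4 → I0 ⊔ J k = Hge2) ∧
    (I0 ⊔ J 5 = ⊤) :=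
  stmt17_general G Dl hDG hDG0 hDD hDD0 bA hbA
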